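/- arXiv:hep-th/9506017 — 2 statements merged into one kernel-verified Lean document; each statement's English description precedes it below -/
import Mathlib

section
/- For an involutive symbol with class indices β_k, the rank of the r-th prolonged symbol equals Σ_{k=1}^{n} binomial(r+k-1, r) β_k. -/
/-!
Unfolding the recursion, `b (r + 1) i` is a sum of `β k` over `i ≤ k ≤ n` weighted by the number
of chains `i ≤ j₀ ≤ ⋯ ≤ j_r = k`, which is `C(k - i + r, r)`; the induction step is the
hockey-stick identity. The rank at level `r` is `∑_{k ≥ 1} b r k = b (r + 1) 1`.
-/

open Finset

theorem sum_Icc_choose_sub_add (r : ℕ) {i k : ℕ} (hik : i ≤ k) :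
    ∑ j ∈ Icc i k, (k - j + r).choose r = (k - i + r + 1).choose (r + 1) := by
  rw [← Ico_add_one_right_eq_Icc, sum_Ico_reflect (fun d ↦ (d + r).choose r) i le_rfl,
    Nat.sub_self, Nat.Ico_zero_eq_range, Nat.sub_add_comm hik, Nat.sum_range_add_choose]

theorem sum_Icc_Icc_comm {M : Type*} [AddCommMonoid M] (i n : ℕ) (f : ℕ → ℕ → M) :
    ∑ j ∈ Icc i n, ∑ k ∈ Icc j n, f j k = ∑ k ∈ Icc i n, ∑ j ∈ Icc i k, f j k :=
  sum_comm' fun j k ↦ by simp only [mem_Icc]; omega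

theorem iterated_suffix_sum_eq {R : Type*} [Semiring R] (n : ℕ) (β : ℕ → R) (b : ℕ → ℕ → R)
    (h0 : ∀ i, b 0 i = β i) (hrec : ∀ r i, b (r + 1) i = ∑ k ∈ Icc i n, b r k) (r i : ℕ) :
    b (r + 1) i = ∑ k ∈ Icc i n, ((k - i + r).choose r : R) * β k := by
  induction r generalizing i with
  | zero => simp [hrec, h0]
  | succ r ih =>
    rw [hrec]
    simp_rw [ih]
    rw [sum_Icc_Icc_comm]
    refine sum_congr rfl fun k hk ↦ ?_
    rw [← sum_mul, ← Nat.cast_sum, sum_Icc_choose_sub_add r (mem_Icc.1 hk).1]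
    rfl

/-- The rank of the r-th prolonged symbol of an involutive symbol with class
indices β equals `∑_{k=1}^n C(r+k-1, r) β k`. -/
theorem rank_prolonged_symbol (n : ℕ) (β : ℕ → ℕ) (b : ℕ → ℕ → ℕ)
    (h0 : ∀ i, b 0 i = β i)
    (hrec : ∀ r i, b (r + 1) i = ∑ k ∈ Finset.Icc i n, b r k) :
    ∀ r, (∑ k ∈ Finset.Icc 1 n, b r k) =
      ∑ k ∈ Finset.Icc 1 n, Nat.choose (r + k - 1) r * β k := by
  intro r
  rw [← hrec, iterated_suffix_sum_eq n β b h0 hrec r 1]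
  refine sum_congr rfl fun k hk ↦ ?_
  rw [Nat.cast_id, ← Nat.sub_add_comm (mem_Icc.1 hk).1, add_comm k]
end

section
/- For an involutive system, the dimension of the r-th prolonged symbol equals Σ_{k=1}^{n} binomial(r+k-1, r) α^{(q)}_k, where α^{(q)}_k are the Cartan characters; i.e., dim M_{q+r} = Σ_k α^{(q+r)}_k = Σ_k C(r+k-1, r) α^{(q)}_k. -/
/-!
Since `α_k = m·C(q+n-k-1, q-1) - β_k`, the identity is linear in `β` and reduces to
`C(q+r+n-1, q+r) = ∑_k C(r+k-1, r)·C(q+n-k-1, q-1)`. Both sides are the coefficient of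
`X^(n-1)` in `(1 - X)^(-(q+r+1)) = (1 - X)^(-(r+1)) · (1 - X)^(-q)`.
-/

open Finset PowerSeries

theorem Nat.sum_antidiagonal_add_choose_mul_add_choose (a b N : ℕ) :
    ∑ p ∈ antidiagonal N, (a + p.1).choose a * (b + p.2).choose b
      = (a + b + 1 + N).choose (a + b + 1) := by
  have h := congrArg (fun f : ℤ⟦X⟧ => coeff N f)
    (congrArg Units.val (invOneSubPow_add ℤ (a + 1) (b + 1)))
  simp only [Units.val_mul, coeff_mul, show a + 1 + (b + 1) = a + b + 1 + 1 by ring,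
    invOneSubPow_val_succ_eq_mk_add_choose, coeff_mk] at h
  exact_mod_cast h.symm

theorem Nat.add_choose_eq_sum_Icc_choose_mul_choose (n q r : ℕ) (hq : 1 ≤ q) :
    (q + r + n - 1).choose (q + r)
      = ∑ k ∈ Icc 1 n, (r + k - 1).choose r * (q + n - k - 1).choose (q - 1) := by
  obtain ⟨s, rfl⟩ := Nat.exists_eq_add_of_le' hq
  rcases n with _ | N
  · simp [Nat.choose_eq_zero_of_lt]
  calc (s + 1 + r + (N + 1) - 1).choose (s + 1 + r)
      = ∑ p ∈ antidiagonal N, (r + p.1).choose r * (s + p.2).choose s := by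
        rw [Nat.sum_antidiagonal_add_choose_mul_add_choose]; congr 1 <;> omega
    _ = ∑ k ∈ range (N + 1), (r + k).choose r * (s + (N - k)).choose s :=
        Nat.sum_antidiagonal_eq_sum_range_succ (fun i j => (r + i).choose r * (s + j).choose s) N
    _ = _ := by
      rw [← Ico_add_one_right_eq_Icc, sum_Ico_eq_sum_range, Nat.add_sub_cancel]
      refine sum_congr rfl fun k hk => ?_
      rw [mem_range] at hk
      congr 2 <;> omega

theorem hilbert_polynomial_general (n m q r : ℕ) (hq : 1 ≤ q)
    (β : ℕ → ℕ) (α : ℕ → ℤ)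
    (hα : ∀ k, α k = (m * Nat.choose (q + n - k - 1) (q - 1) : ℤ) - β k) :
    (m * Nat.choose (q + r + n - 1) (q + r) : ℤ)
      - ∑ k ∈ Finset.Icc 1 n, (Nat.choose (r + k - 1) r : ℤ) * β k
    = ∑ k ∈ Finset.Icc 1 n, (Nat.choose (r + k - 1) r : ℤ) * α k := by
  simp only [hα, mul_sub, sum_sub_distrib, Nat.add_choose_eq_sum_Icc_choose_mul_choose n q r hq]
  push_cast [mul_sum]
  congr 1
  exact sum_congr rfl fun k _ => by ring

/-- The dimension of the r-th prolonged symbol (the Hilbert polynomial)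
equals `∑_{k=1}^n C(r+k-1, r) α^{(q)}_k`:
`m·C(q+r+n-1, q+r) − ∑_k C(r+k-1,r) β_k = ∑_k C(r+k-1,r) α_k`. -/
theorem hilbert_polynomial (n m q r : ℕ) (hn : 1 ≤ n) (hq : 1 ≤ q)
    (β : ℕ → ℕ) (α : ℕ → ℤ)
    (hβ : ∀ k, k ∈ Finset.Icc 1 n → β k ≤ m * Nat.choose (q + n - k - 1) (q - 1))
    (hα : ∀ k, α k = (m * Nat.choose (q + n - k - 1) (q - 1) : ℤ) - β k) :
    (m * Nat.choose (q + r + n - 1) (q + r) : ℤ)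
      - ∑ k ∈ Finset.Icc 1 n, (Nat.choose (r + k - 1) r : ℤ) * β k
    = ∑ k ∈ Finset.Icc 1 n, (Nat.choose (r + k - 1) r : ℤ) * α k :=
  hilbert_polynomial_general n m q r hq β α hα
end
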